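/- Let Φ_λ, λ ∈ Λ, be a family of quantum channels and p a probability distribution on Λ. If for each λ the channel Φ_λ has the form 𝒜_λ ⊗ ℬ_λ (a product of local channels), and ρ is a bipartite state admitting a local hidden state model from A to B (i.e., is A→B unsteerable), then Σ_λ p_λ (𝒜_λ ⊗ ℬ_λ)(ρ) is also A→B unsteerable. Proof reduces to: for POVMs {E_{a|x}}, {E_{b|y}}, tr[(E_{a|x} ⊗ E_{b|y})(𝒜⊗ℬ)(ρ)] = tr[(𝒜†(E_{a|x}) ⊗ ℬ†(E_{b|y})) ρ], and the adjoints of CPTP maps applied to POVMs yield POVMs. -/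

import Mathlib

/-! Writing the local channels in Kraus form `𝒜 = Σᵢ Kᵢ · Kᵢᴴ`, the correlations of `(𝒜 ⊗ ℬ)(ρ)`
are those of `ρ` under the pulled-back measurements `𝒜†(E_{a|x})`, `ℬ†(F_{b|y})`, which are again
POVMs because `𝒜†` is positive and unital. An LHS model of `ρ` for them becomes one for
`(𝒜 ⊗ ℬ)(ρ)` after pushing the hidden states forward through `ℬ`. A convex mixture of states with
LHS models has the LHS model whose hidden variable is the pair of mixture index and hidden variable.
-/

open scoped BigOperators Kronecker ENNReal NNReal ComplexOrder
open Matrix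

noncomputable section

/-- A density matrix: positive semidefinite with unit trace. -/
def IsDensity {ι : Type*} [Fintype ι] (ρ : Matrix ι ι ℂ) : Prop :=
  ρ.PosSemidef ∧ ρ.trace = 1

/-- A completely positive trace-preserving map, presented by a Kraus decomposition. -/
def IsCPTP {ι κ : Type*} [Fintype ι] [DecidableEq ι] [Fintype κ] [DecidableEq κ]
    (Φ : Matrix ι ι ℂ → Matrix κ κ ℂ) : Prop :=
  ∃ (r : ℕ) (K : Fin r → Matrix κ ι ℂ),
    (∀ M, Φ M = ∑ i, K i * M * (K i)ᴴ) ∧ (∑ i, (K i)ᴴ * K i = 1)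

/-- Ampliation `Φ ⊗ id` of a superoperator, acting on the first tensor factor. -/
def ampL {ι κ α : Type*} (Φ : Matrix ι ι ℂ → Matrix κ κ ℂ) :
    Matrix (ι × α) (ι × α) ℂ → Matrix (κ × α) (κ × α) ℂ :=
  fun M => Matrix.of fun p q =>
    Φ (Matrix.of fun i j => M (i, p.2) (j, q.2)) p.1 q.1

/-- Ampliation `id ⊗ Λ` of a superoperator, acting on the second tensor factor. -/
def ampR {ι κ α : Type*} (Λ : Matrix ι ι ℂ → Matrix κ κ ℂ) :
    Matrix (α × ι) (α × ι) ℂ → Matrix (α × κ) (α × κ) ℂ :=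
  fun M => Matrix.of fun p q =>
    Λ (Matrix.of fun i j => M (p.1, i) (q.1, j)) p.2 q.2

/-- Tensor product `Φ ⊗ Λ` of superoperators. -/
def tensorMap {ι κ ι' κ' : Type*} (Φ : Matrix ι ι ℂ → Matrix κ κ ℂ)
    (Λ : Matrix ι' ι' ℂ → Matrix κ' κ' ℂ) :
    Matrix (ι × ι') (ι × ι') ℂ → Matrix (κ × κ') (κ × κ') ℂ :=
  fun M => ampL Φ (ampR Λ M)

/-- The positive semidefinite square root of a positive semidefinite matrix
(the former Mathlib `Matrix.PosSemidef.sqrt`). -/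
def posSemidefSqrt {ι : Type*} [Fintype ι] [DecidableEq ι] {A : Matrix ι ι ℂ}
    (hA : A.PosSemidef) : Matrix ι ι ℂ :=
  hA.1.eigenvectorUnitary.1 * diagonal ((↑) ∘ (√·) ∘ hA.1.eigenvalues) *
  (star hA.1.eigenvectorUnitary : Matrix ι ι ℂ)

/-- Trace norm `‖M‖₁ = tr √(MᴴM)`. -/
def traceNorm {ι : Type*} [Fintype ι] [DecidableEq ι] (M : Matrix ι ι ℂ) : ℝ :=
  ((posSemidefSqrt (Matrix.posSemidef_conjTranspose_mul_self M)).trace).re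

/-- Diamond norm: supremum over finite-dimensional ancillas and joint states of the
trace norm of the ampliated output. -/
def diamondNorm {ι κ : Type*} [Fintype ι] [DecidableEq ι] [Fintype κ] [DecidableEq κ]
    (Φ : Matrix ι ι ℂ → Matrix κ κ ℂ) : ℝ :=
  ⨆ a : ℕ, ⨆ ρ : {ρ : Matrix (ι × Fin a) (ι × Fin a) ℂ // IsDensity ρ},
    traceNorm (ampL Φ (α := Fin a) ρ.1)

/-- A bipartite state `ρ` is A→B unsteerable: for all local POVM families
`{E_{a|x}}`, `{F_{b|y}}` there is a (finite) local hidden state model reproducing the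
correlations `tr[(E_{a|x} ⊗ F_{b|y})ρ] = Σ_λ p_λ P(a|x,λ) tr(F_{b|y} σ_λ)`. -/
def Unsteerable {a b : ℕ} (ρ : Matrix (Fin a × Fin b) (Fin a × Fin b) ℂ) : Prop :=
  ∀ (X A Y B : Type) [Fintype X] [Fintype A] [Fintype Y] [Fintype B],
    ∀ (E : X → A → Matrix (Fin a) (Fin a) ℂ) (F : Y → B → Matrix (Fin b) (Fin b) ℂ),
      (∀ x α, (E x α).PosSemidef) → (∀ x, ∑ α, E x α = 1) →
      (∀ y β, (F y β).PosSemidef) → (∀ y, ∑ β, F y β = 1) →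
      ∃ (L : ℕ) (p : Fin L → ℝ) (P : X → A → Fin L → ℝ)
        (σ : Fin L → Matrix (Fin b) (Fin b) ℂ),
        (∀ l, 0 ≤ p l) ∧ (∑ l, p l = 1) ∧
        (∀ x α l, 0 ≤ P x α l) ∧ (∀ x l, ∑ α, P x α l = 1) ∧
        (∀ l, IsDensity (σ l)) ∧
        ∀ x α y β,
          (((E x α) ⊗ₖ (F y β) * ρ).trace).re
            = ∑ l, p l * P x α l * (((F y β) * σ l).trace).re

section Kraus

variable {ι κ R : Type*} [Fintype R]

def krausMap [Fintype ι] (K : R → Matrix κ ι ℂ) (M : Matrix ι ι ℂ) : Matrix κ κ ℂ :=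
  ∑ i, K i * M * (K i)ᴴ

def krausAdjoint [Fintype κ] (K : R → Matrix κ ι ℂ) (E : Matrix κ κ ℂ) : Matrix ι ι ℂ :=
  ∑ i, (K i)ᴴ * E * K i

theorem trace_mul_krausMap [Fintype ι] [Fintype κ] (K : R → Matrix κ ι ℂ) (E : Matrix κ κ ℂ)
    (M : Matrix ι ι ℂ) : (E * krausMap K M).trace = (krausAdjoint K E * M).trace := by
  simp only [krausMap, krausAdjoint, Matrix.mul_sum, Matrix.sum_mul, trace_sum]
  refine Finset.sum_congr rfl fun i _ => ?_
  rw [← Matrix.mul_assoc, ← Matrix.mul_assoc, trace_mul_cycle]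
  simp only [Matrix.mul_assoc]

theorem Matrix.PosSemidef.krausAdjoint [Fintype ι] [Fintype κ] {E : Matrix κ κ ℂ}
    (hE : E.PosSemidef) (K : R → Matrix κ ι ℂ) : (krausAdjoint K E).PosSemidef :=
  posSemidef_sum _ fun i _ => hE.conjTranspose_mul_mul_same (K i)

theorem Matrix.PosSemidef.krausMap [Fintype ι] [Fintype κ] {M : Matrix ι ι ℂ}
    (hM : M.PosSemidef) (K : R → Matrix κ ι ℂ) : (krausMap K M).PosSemidef :=
  posSemidef_sum _ fun i _ => hM.mul_mul_conjTranspose_same (K i)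

theorem krausAdjoint_sum [Fintype κ] {A : Type*} [Fintype A] (K : R → Matrix κ ι ℂ)
    (E : A → Matrix κ κ ℂ) : krausAdjoint K (∑ α, E α) = ∑ α, krausAdjoint K (E α) := by
  simp only [krausAdjoint, Matrix.mul_sum, Matrix.sum_mul]
  exact Finset.sum_comm

theorem krausAdjoint_one [Fintype κ] [DecidableEq ι] [DecidableEq κ] {K : R → Matrix κ ι ℂ}
    (hK : ∑ i, (K i)ᴴ * K i = 1) : krausAdjoint K 1 = 1 := by
  simpa [krausAdjoint] using hK

theorem isDensity_krausMap [Fintype ι] [Fintype κ] [DecidableEq ι] [DecidableEq κ]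
    {K : R → Matrix κ ι ℂ} (hK : ∑ i, (K i)ᴴ * K i = 1) {σ : Matrix ι ι ℂ} (hσ : IsDensity σ) :
    IsDensity (krausMap K σ) := by
  refine ⟨hσ.1.krausMap K, ?_⟩
  rw [← one_mul (krausMap K σ), trace_mul_krausMap, krausAdjoint_one hK, one_mul, hσ.2]

theorem sum_kronecker_sum {l m n p S T : Type*} [Fintype S] [Fintype T]
    (A : S → Matrix l m ℂ) (B : T → Matrix n p ℂ) :
    (∑ i, A i) ⊗ₖ (∑ j, B j) = ∑ ij : S × T, A ij.1 ⊗ₖ B ij.2 := by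
  ext ⟨i, j⟩ ⟨k, l⟩
  simp [Matrix.sum_apply, Fintype.sum_prod_type, Finset.sum_mul_sum]

theorem krausAdjoint_kronecker {ι' κ' R' : Type*} [Fintype κ] [Fintype κ'] [Fintype R']
    (K : R → Matrix κ ι ℂ) (K' : R' → Matrix κ' ι' ℂ) (E : Matrix κ κ ℂ)
    (E' : Matrix κ' κ' ℂ) :
    krausAdjoint (fun i : R × R' => K i.1 ⊗ₖ K' i.2) (E ⊗ₖ E') =
      krausAdjoint K E ⊗ₖ krausAdjoint K' E' := by
  simp only [krausAdjoint, sum_kronecker_sum, conjTranspose_kronecker, mul_kronecker_mul]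

theorem tensorMap_krausMap {ι' κ' R' : Type*} [Fintype ι] [Fintype ι'] [Fintype R']
    (K : R → Matrix κ ι ℂ) (K' : R' → Matrix κ' ι' ℂ) (M : Matrix (ι × ι') (ι × ι') ℂ) :
    tensorMap (krausMap K) (krausMap K') M =
      krausMap (fun i : R × R' => K i.1 ⊗ₖ K' i.2) M := by
  ext ⟨k, k'⟩ ⟨l, l'⟩
  simp only [tensorMap, ampL, ampR, krausMap, of_apply, Matrix.sum_apply, mul_apply,
    conjTranspose_apply, kroneckerMap_apply, Fintype.sum_prod_type, Finset.sum_mul,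
    Finset.mul_sum, star_mul']
  refine Finset.sum_congr rfl fun r _ => ?_
  conv_lhs => enter [2, i]; rw [Finset.sum_comm]
  rw [Finset.sum_comm]
  refine Finset.sum_congr rfl fun r' _ => Finset.sum_congr rfl fun i _ => ?_
  rw [Finset.sum_comm]
  refine Finset.sum_congr rfl fun i' _ => Finset.sum_congr rfl fun j _ =>
    Finset.sum_congr rfl fun j' _ => ?_
  ring

end Kraus

theorem Unsteerable.tensorMap {a b : ℕ} {ρ : Matrix (Fin a × Fin b) (Fin a × Fin b) ℂ}
    {𝒜 : Matrix (Fin a) (Fin a) ℂ → Matrix (Fin a) (Fin a) ℂ}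
    {ℬ : Matrix (Fin b) (Fin b) ℂ → Matrix (Fin b) (Fin b) ℂ}
    (hρ : Unsteerable ρ) (h𝒜 : IsCPTP 𝒜) (hℬ : IsCPTP ℬ) : Unsteerable (tensorMap 𝒜 ℬ ρ) := by
  obtain ⟨r, K, h𝒜, hK⟩ := h𝒜
  obtain ⟨s, K', hℬ, hK'⟩ := hℬ
  obtain rfl : 𝒜 = krausMap K := funext h𝒜
  obtain rfl : ℬ = krausMap K' := funext hℬ
  intro X A Y B _ _ _ _ E F hE hE1 hF hF1
  obtain ⟨L, p, P, σ, hp, hp1, hP, hP1, hσ, hcorr⟩ :=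
    hρ X A Y B (fun x α => krausAdjoint K (E x α)) (fun y β => krausAdjoint K' (F y β))
      (fun x α => (hE x α).krausAdjoint K)
      (fun x => by rw [← krausAdjoint_sum, hE1, krausAdjoint_one hK])
      (fun y β => (hF y β).krausAdjoint K')
      (fun y => by rw [← krausAdjoint_sum, hF1, krausAdjoint_one hK'])
  refine ⟨L, p, P, fun l => krausMap K' (σ l), hp, hp1, hP, hP1,
    fun l => isDensity_krausMap hK' (hσ l), fun x α y β => ?_⟩
  rw [tensorMap_krausMap, trace_mul_krausMap, krausAdjoint_kronecker, hcorr]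
  simp only [trace_mul_krausMap]

theorem Unsteerable.sum_smul {a b : ℕ} {ι : Type*} [Fintype ι] {q : ι → ℝ}
    (hq : ∀ ν, 0 ≤ q ν) (hq1 : ∑ ν, q ν = 1)
    {ρ : ι → Matrix (Fin a × Fin b) (Fin a × Fin b) ℂ} (hρ : ∀ ν, Unsteerable (ρ ν)) :
    Unsteerable (∑ ν, q ν • ρ ν) := by
  intro X A Y B _ _ _ _ E F hE hE1 hF hF1
  choose L p P σ hp hp1 hP hP1 hσ hcorr using fun ν => hρ ν X A Y B E F hE hE1 hF hF1
  let e := (Fintype.equivFin (Σ ν, Fin (L ν))).symm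
  have sum_reindex (g : (Σ ν, Fin (L ν)) → ℝ) : ∑ l, g (e l) = ∑ ν, ∑ k, g ⟨ν, k⟩ := by
    rw [e.sum_comp g, Fintype.sum_sigma]
  refine ⟨_, fun l => q (e l).1 * p _ (e l).2, fun x α l => P _ x α (e l).2,
    fun l => σ _ (e l).2, fun l => mul_nonneg (hq _) (hp _ _), ?_, fun x α l => hP _ _ _ _,
    fun x l => hP1 _ _ _, fun l => hσ _ _, fun x α y β => ?_⟩
  · rw [sum_reindex fun s => q s.1 * p s.1 s.2]
    simp only [← Finset.mul_sum, hp1, mul_one, hq1]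
  · rw [sum_reindex fun s => q s.1 * p s.1 s.2 * P s.1 x α s.2 * (F y β * σ s.1 s.2).trace.re]
    simp only [mul_smul_comm, trace_sum, trace_smul, Complex.re_sum,
      Complex.smul_re, hcorr, smul_eq_mul, Finset.mul_sum, mul_assoc]

theorem unsteerable_losr_closed_general {a b L₀ : ℕ} (q : Fin L₀ → ℝ)
    (hq : ∀ ν, 0 ≤ q ν) (hq1 : ∑ ν, q ν = 1)
    (𝒜 : Fin L₀ → (Matrix (Fin a) (Fin a) ℂ → Matrix (Fin a) (Fin a) ℂ))
    (ℬ : Fin L₀ → (Matrix (Fin b) (Fin b) ℂ → Matrix (Fin b) (Fin b) ℂ))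
    (h𝒜 : ∀ ν, IsCPTP (𝒜 ν)) (hℬ : ∀ ν, IsCPTP (ℬ ν))
    (ρ : Matrix (Fin a × Fin b) (Fin a × Fin b) ℂ)
    (hun : Unsteerable ρ) :
    Unsteerable (∑ ν, q ν • tensorMap (𝒜 ν) (ℬ ν) ρ) :=
  Unsteerable.sum_smul hq hq1 fun ν => hun.tensorMap (h𝒜 ν) (hℬ ν)

/-- A convex combination of products of local channels (an LOSR
channel) applied to an A→B unsteerable state yields an A→B unsteerable state. -/
theorem unsteerable_losr_closed {a b L₀ : ℕ} (q : Fin L₀ → ℝ)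
    (hq : ∀ ν, 0 ≤ q ν) (hq1 : ∑ ν, q ν = 1)
    (𝒜 : Fin L₀ → (Matrix (Fin a) (Fin a) ℂ → Matrix (Fin a) (Fin a) ℂ))
    (ℬ : Fin L₀ → (Matrix (Fin b) (Fin b) ℂ → Matrix (Fin b) (Fin b) ℂ))
    (h𝒜 : ∀ ν, IsCPTP (𝒜 ν)) (hℬ : ∀ ν, IsCPTP (ℬ ν))
    (ρ : Matrix (Fin a × Fin b) (Fin a × Fin b) ℂ) (hρ : IsDensity ρ)
    (hun : Unsteerable ρ) :
    Unsteerable (∑ ν, q ν • tensorMap (𝒜 ν) (ℬ ν) ρ) :=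
  unsteerable_losr_closed_general q hq hq1 𝒜 ℬ h𝒜 hℬ ρ hun

end
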